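/- Under the frame setup on ℝ_s × ℝ_t × ℝ²_x with S, v of class C³, assume the caloric gauge conditions: A_s ≡ 0 and ψ_s = D₁ ψ₁ + D₂ ψ₂ pointwise. Then for every α ∈ {t, 1, 2} the field ψ_α satisfies the covariant heat equation pointwise: ∂_s ψ_α − ( ∂₁² + ∂₂² ) ψ_α = 2 i ( A₁ ∂₁ ψ_α + A₂ ∂₂ ψ_α ) − ( A₁² + A₂² − i ( ∂₁ A₁ + ∂₂ A₂ ) ) ψ_α + i ( Im( ψ_α conj(ψ₁) ) ψ₁ + Im( ψ_α conj(ψ₂) ) ψ₂ ). -/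

import Mathlib

/-!
Since `A_s = 0`, the torsion identity `D_α ψ_β = D_β ψ_α` gives `∂_s ψ_α = D_α ψ_s`, and by the
caloric condition this is `Σ_k D_α D_k ψ_k`. Commuting the covariant derivatives costs the
curvature `∂_α A_k − ∂_k A_α = Im(ψ_α conj ψ_k)`, and torsion again turns `D_k D_α ψ_k` into
`D_k D_k ψ_α`, whose expansion produces the Laplacian and the magnetic terms. Both structure
equations follow from writing `∂v`, `∂w` in the orthonormal frame `(S, v, w)` and from the
symmetry of second derivatives.
-/

open Matrix

/-- The heat-time direction in `ℝ_s × ℝ_t × ℝ²_x`. -/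
def es : ℝ × ℝ × ℝ × ℝ := (1, 0, 0, 0)
/-- The Schrödinger-time direction in `ℝ_s × ℝ_t × ℝ²_x`. -/
def et : ℝ × ℝ × ℝ × ℝ := (0, 1, 0, 0)
/-- The first spatial direction in `ℝ_s × ℝ_t × ℝ²_x`. -/
def e1 : ℝ × ℝ × ℝ × ℝ := (0, 0, 1, 0)
/-- The second spatial direction in `ℝ_s × ℝ_t × ℝ²_x`. -/
def e2 : ℝ × ℝ × ℝ × ℝ := (0, 0, 0, 1)

/-- Partial derivative of `f` in direction `e`. -/
noncomputable def pd4 {E : Type*} [NormedAddCommGroup E] [NormedSpace ℝ E]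
    (f : ℝ × ℝ × ℝ × ℝ → E) (e : ℝ × ℝ × ℝ × ℝ) (p : ℝ × ℝ × ℝ × ℝ) : E :=
  fderiv ℝ f p e

/-- The complexified differentiated field `ψ_α = ⟨v, ∂_α S⟩ + i ⟨w, ∂_α S⟩`. -/
noncomputable def framePsi (S v w : ℝ × ℝ × ℝ × ℝ → Fin 3 → ℝ) (e p : ℝ × ℝ × ℝ × ℝ) : ℂ :=
  ((v p ⬝ᵥ pd4 S e p : ℝ) : ℂ) + Complex.I * ((w p ⬝ᵥ pd4 S e p : ℝ) : ℂ)

/-- The real connection coefficient `A_α = ⟨w, ∂_α v⟩`. -/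
noncomputable def frameA (v w : ℝ × ℝ × ℝ × ℝ → Fin 3 → ℝ) (e p : ℝ × ℝ × ℝ × ℝ) : ℝ :=
  w p ⬝ᵥ pd4 v e p

/-- The covariant derivative `D_α f = ∂_α f + i A_α f`. -/
noncomputable def Dcov (A : ℝ × ℝ × ℝ × ℝ → ℝ) (f : ℝ × ℝ × ℝ × ℝ → ℂ)
    (e p : ℝ × ℝ × ℝ × ℝ) : ℂ :=
  fderiv ℝ f p e + Complex.I * (A p : ℂ) * f p

local notation "ℝ⁴" => ℝ × ℝ × ℝ × ℝ

section ProductRules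

variable {E : Type*} [NormedAddCommGroup E] [NormedSpace ℝ E]

theorem DifferentiableAt.dotProduct {ι : Type*} [Fintype ι] {f g : E → ι → ℝ} {x : E}
    (hf : DifferentiableAt ℝ f x) (hg : DifferentiableAt ℝ g x) :
    DifferentiableAt ℝ (fun y => f y ⬝ᵥ g y) x := by
  change DifferentiableAt ℝ (fun y => ∑ i, f y i * g y i) x
  fun_prop

theorem ContDiff.dotProduct {ι : Type*} [Fintype ι] {f g : E → ι → ℝ} {n : WithTop ℕ∞}
    (hf : ContDiff ℝ n f) (hg : ContDiff ℝ n g) : ContDiff ℝ n (fun y => f y ⬝ᵥ g y) := by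
  change ContDiff ℝ n fun y => ∑ i, f y i * g y i
  fun_prop

noncomputable def crossProductCLM : (Fin 3 → ℝ) →L[ℝ] (Fin 3 → ℝ) →L[ℝ] Fin 3 → ℝ :=
  LinearMap.toContinuousLinearMap (LinearMap.toContinuousLinearMap.toLinearMap ∘ₗ crossProduct)

theorem DifferentiableAt.crossProduct {f g : E → Fin 3 → ℝ} {x : E}
    (hf : DifferentiableAt ℝ f x) (hg : DifferentiableAt ℝ g x) :
    DifferentiableAt ℝ (fun y => crossProduct (f y) (g y)) x := by
  change DifferentiableAt ℝ (fun y => crossProductCLM (f y) (g y)) x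
  fun_prop

theorem ContDiff.crossProduct {f g : E → Fin 3 → ℝ} {n : WithTop ℕ∞}
    (hf : ContDiff ℝ n f) (hg : ContDiff ℝ n g) :
    ContDiff ℝ n (fun y => crossProduct (f y) (g y)) := by
  change ContDiff ℝ n (fun y => crossProductCLM (f y) (g y))
  fun_prop

end ProductRules

section Calculus

variable {E : Type*} [NormedAddCommGroup E] [NormedSpace ℝ E] {p : ℝ⁴}

theorem contDiff_pd4 {f : ℝ⁴ → E} {n : WithTop ℕ∞} (hf : ContDiff ℝ (n + 1) f) (e : ℝ⁴) :
    ContDiff ℝ n (pd4 f e) :=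
  (ContinuousLinearMap.apply ℝ E e).contDiff.comp (hf.fderiv_right le_rfl)

theorem ContDiff.differentiableAt_pd4 {f : ℝ⁴ → E} (hf : ContDiff ℝ 2 f) (e p : ℝ⁴) :
    DifferentiableAt ℝ (pd4 f e) p :=
  (contDiff_pd4 (n := 1) hf e).differentiable one_ne_zero p

theorem pd4_comm {f : ℝ⁴ → E} (hf : ContDiff ℝ 2 f) (e e' p : ℝ⁴) :
    pd4 (pd4 f e) e' p = pd4 (pd4 f e') e p := by
  have hd : DifferentiableAt ℝ (fderiv ℝ f) p :=
    (hf.fderiv_right (m := 1) le_rfl).differentiable one_ne_zero p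
  have key (u x : ℝ⁴) : pd4 (pd4 f u) x p = fderiv ℝ (fderiv ℝ f) p x u := by
    change fderiv ℝ (fun q => fderiv ℝ f q u) p x = _
    simp [fderiv_clm_apply hd (differentiableAt_const u)]
  rw [key, key]
  exact (hf.contDiffAt.isSymmSndFDerivAt (by simp [minSmoothness_of_isRCLikeNormedField])).eq e' e

theorem pd4_add {f g : ℝ⁴ → E} (hf : DifferentiableAt ℝ f p) (hg : DifferentiableAt ℝ g p)
    (e : ℝ⁴) : pd4 (fun q => f q + g q) e p = pd4 f e p + pd4 g e p := by
  simp [pd4, fderiv_fun_add hf hg]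

theorem pd4_const_mul {f : ℝ⁴ → ℂ} (hf : DifferentiableAt ℝ f p) (c : ℂ) (e : ℝ⁴) :
    pd4 (fun q => c * f q) e p = c * pd4 f e p := by
  simp [pd4, fderiv_const_mul hf]

theorem pd4_ofReal {a : ℝ⁴ → ℝ} (ha : DifferentiableAt ℝ a p) (e : ℝ⁴) :
    pd4 (fun q => (a q : ℂ)) e p = pd4 a e p :=
  congrArg (· e) (Complex.ofRealCLM.hasFDerivAt.comp p ha.hasFDerivAt).fderiv

theorem pd4_ofReal_mul {a : ℝ⁴ → ℝ} {f : ℝ⁴ → ℂ} (ha : DifferentiableAt ℝ a p)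
    (hf : DifferentiableAt ℝ f p) (e : ℝ⁴) :
    pd4 (fun q => (a q : ℂ) * f q) e p = pd4 a e p * f p + a p * pd4 f e p := by
  have ha' : DifferentiableAt ℝ (fun q => (a q : ℂ)) p := by fun_prop
  rw [← pd4_ofReal ha e]
  simp only [pd4, fderiv_fun_mul ha' hf, _root_.add_apply, _root_.smul_apply, smul_eq_mul]
  ring

theorem pd4_dotProduct {ι : Type*} [Fintype ι] {f g : ℝ⁴ → ι → ℝ}
    (hf : DifferentiableAt ℝ f p) (hg : DifferentiableAt ℝ g p) (e : ℝ⁴) :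
    pd4 (fun q => f q ⬝ᵥ g q) e p = pd4 f e p ⬝ᵥ g p + f p ⬝ᵥ pd4 g e p := by
  have hfi (i : ι) := differentiableAt_pi.1 hf i
  have hgi (i : ι) := differentiableAt_pi.1 hg i
  simp only [pd4, dotProduct]
  rw [fderiv_fun_sum fun i _ => (hfi i).fun_mul (hgi i)]
  simp [fderiv_fun_mul (hfi _) (hgi _), fderiv_apply hf, fderiv_apply hg, Finset.sum_add_distrib,
    mul_comm, add_comm]

theorem dotProduct_pd4_eq_neg {ι : Type*} [Fintype ι] {f g : ℝ⁴ → ι → ℝ} {c : ℝ}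
    (hfg : ∀ q, f q ⬝ᵥ g q = c) (hf : DifferentiableAt ℝ f p) (hg : DifferentiableAt ℝ g p)
    (e : ℝ⁴) : f p ⬝ᵥ pd4 g e p = -(g p ⬝ᵥ pd4 f e p) := by
  have h := pd4_dotProduct hf hg e
  simp only [hfg] at h
  rw [show pd4 (fun _ => c) e p = 0 by simp [pd4], dotProduct_comm] at h
  linear_combination -h

theorem dotProduct_pd4_self_eq_zero {ι : Type*} [Fintype ι] {f : ℝ⁴ → ι → ℝ} {c : ℝ}
    (hf1 : ∀ q, f q ⬝ᵥ f q = c) (hf : DifferentiableAt ℝ f p) (e : ℝ⁴) :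
    f p ⬝ᵥ pd4 f e p = 0 := by
  linarith [dotProduct_pd4_eq_neg hf1 hf hf e]

end Calculus

section CovariantDerivative

open Complex

variable {A B : ℝ⁴ → ℝ} {f g : ℝ⁴ → ℂ} {p : ℝ⁴}

theorem Dcov_apply (A : ℝ⁴ → ℝ) (f : ℝ⁴ → ℂ) (e p : ℝ⁴) :
    Dcov A f e p = pd4 f e p + I * A p * f p :=
  rfl

theorem Dcov_add (hf : DifferentiableAt ℝ f p) (hg : DifferentiableAt ℝ g p) (e : ℝ⁴) :
    Dcov A (fun q => f q + g q) e p = Dcov A f e p + Dcov A g e p := by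
  simp only [Dcov_apply, pd4_add hf hg]
  ring

theorem contDiff_Dcov {n : WithTop ℕ∞} (hA : ContDiff ℝ n A) (hf : ContDiff ℝ (n + 1) f)
    (e : ℝ⁴) : ContDiff ℝ n (Dcov A f e) :=
  (contDiff_pd4 hf e).add
    ((contDiff_const.mul (ofRealCLM.contDiff.comp hA)).mul (hf.of_le le_self_add))

theorem pd4_Dcov (hA : DifferentiableAt ℝ A p) (hf : DifferentiableAt ℝ f p)
    (hf' : DifferentiableAt ℝ (pd4 f e) p) (e' : ℝ⁴) :
    pd4 (Dcov A f e) e' p = pd4 (pd4 f e) e' p + I * pd4 A e' p * f p + I * A p * pd4 f e' p := by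
  have hA' : DifferentiableAt ℝ (fun q => (A q : ℂ) * f q) p :=
    (ofRealCLM.differentiableAt.comp p hA).mul hf
  have hDcov : Dcov A f e = fun q => pd4 f e q + I * ((A q : ℂ) * f q) := by
    funext q; simp only [Dcov, pd4, mul_assoc]
  rw [hDcov, pd4_add hf' (hA'.const_mul I), pd4_const_mul hA', pd4_ofReal_mul hA hf]
  ring

theorem Dcov_Dcov_self (hA : DifferentiableAt ℝ A p) (hf : DifferentiableAt ℝ f p)
    (hf' : DifferentiableAt ℝ (pd4 f e) p) :
    Dcov A (Dcov A f e) e p = pd4 (pd4 f e) e p + 2 * I * A p * pd4 f e p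
      + I * pd4 A e p * f p - (A p : ℂ) ^ 2 * f p := by
  simp only [Dcov_apply]
  rw [pd4_Dcov hA hf hf' e]
  linear_combination (A p : ℂ) ^ 2 * f p * I_sq

theorem Dcov_Dcov_sub_Dcov_Dcov (hA : DifferentiableAt ℝ A p) (hB : DifferentiableAt ℝ B p)
    (hf : ContDiff ℝ 2 f) (e e' : ℝ⁴) :
    Dcov A (Dcov B f e') e p - Dcov B (Dcov A f e) e' p
      = I * (pd4 B e p - pd4 A e' p) * f p := by
  have hf1 : DifferentiableAt ℝ f p := hf.differentiable two_ne_zero p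
  simp only [Dcov_apply]
  rw [pd4_Dcov hB hf1 (hf.differentiableAt_pd4 e' p), pd4_Dcov hA hf1 (hf.differentiableAt_pd4 e p),
    pd4_comm hf e' e]
  ring

end CovariantDerivative

structure IsOrthonormalFrame (S v w : ℝ⁴ → Fin 3 → ℝ) : Prop where
  S_dot_S : ∀ p, S p ⬝ᵥ S p = 1
  v_dot_v : ∀ p, v p ⬝ᵥ v p = 1
  S_dot_v : ∀ p, S p ⬝ᵥ v p = 0
  w_eq : ∀ p, w p = crossProduct (S p) (v p)

namespace IsOrthonormalFrame

open Complex

variable {S v w : ℝ⁴ → Fin 3 → ℝ} (F : IsOrthonormalFrame S v w) {p : ℝ⁴}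
include F

theorem w_dot_w (p : ℝ⁴) : w p ⬝ᵥ w p = 1 := by
  rw [F.w_eq, cross_dot_cross, F.S_dot_S, F.v_dot_v, F.S_dot_v, dotProduct_comm, F.S_dot_v]
  ring

theorem S_dot_w (p : ℝ⁴) : S p ⬝ᵥ w p = 0 := by
  rw [F.w_eq, dot_self_cross]

theorem v_dot_w (p : ℝ⁴) : v p ⬝ᵥ w p = 0 := by
  rw [F.w_eq, dot_cross_self]

theorem dotProduct_eq (p : ℝ⁴) (u u' : Fin 3 → ℝ) :
    u ⬝ᵥ u' = (S p ⬝ᵥ u) * (S p ⬝ᵥ u') + (v p ⬝ᵥ u) * (v p ⬝ᵥ u') + (w p ⬝ᵥ u) * (w p ⬝ᵥ u') := by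
  -- a polynomial identity in `S p, v p, u, u'` (with `w p = S p ⨯₃ v p`), valid for any `S p, v p`
  have key : (S p ⬝ᵥ u) * (S p ⬝ᵥ u') * (v p ⬝ᵥ v p) + (v p ⬝ᵥ u) * (v p ⬝ᵥ u') * (S p ⬝ᵥ S p)
      + (w p ⬝ᵥ u) * (w p ⬝ᵥ u')
      - (S p ⬝ᵥ v p) * ((S p ⬝ᵥ u) * (v p ⬝ᵥ u') + (v p ⬝ᵥ u) * (S p ⬝ᵥ u'))
      = (u ⬝ᵥ u') * ((S p ⬝ᵥ S p) * (v p ⬝ᵥ v p) - (S p ⬝ᵥ v p) ^ 2) := by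
    rw [F.w_eq]
    simp only [cross_apply, vec3_dotProduct, cons_val_zero, cons_val_one, cons_val]
    ring
  rw [F.S_dot_S, F.v_dot_v, F.S_dot_v] at key
  linear_combination -key

theorem differentiableAt_w (hS : DifferentiableAt ℝ S p) (hv : DifferentiableAt ℝ v p) :
    DifferentiableAt ℝ w p := by
  rw [show w = fun q => crossProduct (S q) (v q) from funext F.w_eq]
  exact hS.crossProduct hv

theorem contDiff_w {n : WithTop ℕ∞} (hS : ContDiff ℝ n S) (hv : ContDiff ℝ n v) :
    ContDiff ℝ n w := by
  rw [show w = fun q => crossProduct (S q) (v q) from funext F.w_eq]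
  exact hS.crossProduct hv

section FirstOrder

variable (hS : DifferentiableAt ℝ S p) (hv : DifferentiableAt ℝ v p)
include hS hv

theorem pd4_v_dot_pd4_S (e e' : ℝ⁴) :
    pd4 v e p ⬝ᵥ pd4 S e' p = frameA v w e p * (w p ⬝ᵥ pd4 S e' p) := by
  rw [F.dotProduct_eq p, dotProduct_pd4_self_eq_zero F.S_dot_S hS,
    dotProduct_pd4_self_eq_zero F.v_dot_v hv, frameA]
  ring

theorem pd4_w_dot_pd4_S (e e' : ℝ⁴) :
    pd4 w e p ⬝ᵥ pd4 S e' p = -(frameA v w e p * (v p ⬝ᵥ pd4 S e' p)) := by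
  have hw := F.differentiableAt_w hS hv
  rw [F.dotProduct_eq p, dotProduct_pd4_self_eq_zero F.S_dot_S hS,
    dotProduct_pd4_self_eq_zero F.w_dot_w hw, dotProduct_pd4_eq_neg F.v_dot_w hv hw, frameA]
  ring

theorem pd4_w_dot_pd4_v (e e' : ℝ⁴) :
    pd4 w e p ⬝ᵥ pd4 v e' p = (w p ⬝ᵥ pd4 S e p) * (v p ⬝ᵥ pd4 S e' p) := by
  have hw := F.differentiableAt_w hS hv
  rw [F.dotProduct_eq p, dotProduct_pd4_self_eq_zero F.v_dot_v hv,
    dotProduct_pd4_self_eq_zero F.w_dot_w hw, dotProduct_pd4_eq_neg F.S_dot_w hS hw,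
    dotProduct_pd4_eq_neg F.S_dot_v hS hv]
  ring

end FirstOrder

theorem pd4_framePsi (hS : ContDiff ℝ 2 S) (hv : DifferentiableAt ℝ v p) (e e' : ℝ⁴) :
    pd4 (framePsi S v w e) e' p
      = ((v p ⬝ᵥ pd4 (pd4 S e) e' p : ℝ) : ℂ) + I * ((w p ⬝ᵥ pd4 (pd4 S e) e' p : ℝ) : ℂ)
        - I * frameA v w e' p * framePsi S v w e p := by
  have hS' : DifferentiableAt ℝ S p := hS.differentiable two_ne_zero p
  have hw := F.differentiableAt_w hS' hv
  have hvS := hv.dotProduct (hS.differentiableAt_pd4 e p)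
  have hwS := hw.dotProduct (hS.differentiableAt_pd4 e p)
  have hvS' : DifferentiableAt ℝ (fun q => ((v q ⬝ᵥ pd4 S e q : ℝ) : ℂ)) p := by fun_prop
  have hwS' : DifferentiableAt ℝ (fun q => I * ((w q ⬝ᵥ pd4 S e q : ℝ) : ℂ)) p := by fun_prop
  have hψ : framePsi S v w e = fun q =>
      ((v q ⬝ᵥ pd4 S e q : ℝ) : ℂ) + I * ((w q ⬝ᵥ pd4 S e q : ℝ) : ℂ) := rfl
  rw [hψ, pd4_add hvS' hwS', pd4_const_mul (by fun_prop),
    pd4_ofReal hvS, pd4_ofReal hwS, pd4_dotProduct hv (hS.differentiableAt_pd4 e p),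
    pd4_dotProduct hw (hS.differentiableAt_pd4 e p),
    F.pd4_v_dot_pd4_S hS' hv, F.pd4_w_dot_pd4_S hS' hv]
  push_cast
  linear_combination (frameA v w e' p : ℂ) * (w p ⬝ᵥ pd4 S e p : ℝ) * I_sq

theorem pd4_frameA (hS : DifferentiableAt ℝ S p) (hv : ContDiff ℝ 2 v) (e e' : ℝ⁴) :
    pd4 (frameA v w e) e' p
      = (w p ⬝ᵥ pd4 S e' p) * (v p ⬝ᵥ pd4 S e p) + w p ⬝ᵥ pd4 (pd4 v e) e' p := by
  have hv1 : DifferentiableAt ℝ v p := hv.differentiable two_ne_zero p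
  rw [show frameA v w e = fun q => w q ⬝ᵥ pd4 v e q from rfl,
    pd4_dotProduct (F.differentiableAt_w hS hv1) (hv.differentiableAt_pd4 e p),
    F.pd4_w_dot_pd4_v hS hv1]

theorem Dcov_framePsi_comm (hS : ContDiff ℝ 2 S) (hv : DifferentiableAt ℝ v p) (e e' : ℝ⁴) :
    Dcov (frameA v w e') (framePsi S v w e) e' p = Dcov (frameA v w e) (framePsi S v w e') e p := by
  rw [Dcov_apply, Dcov_apply, F.pd4_framePsi hS hv, F.pd4_framePsi hS hv, pd4_comm hS e e']
  ring

theorem pd4_frameA_sub_pd4_frameA (hS : DifferentiableAt ℝ S p) (hv : ContDiff ℝ 2 v)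
    (e e' : ℝ⁴) :
    pd4 (frameA v w e) e' p - pd4 (frameA v w e') e p
      = (framePsi S v w e' p * starRingEnd ℂ (framePsi S v w e p)).im := by
  rw [F.pd4_frameA hS hv, F.pd4_frameA hS hv, pd4_comm hv e e']
  simp only [framePsi, map_add, map_mul, conj_ofReal, conj_I, mul_im, add_im, add_re, mul_re,
    ofReal_re, ofReal_im, I_re, I_im, neg_re, neg_im]
  ring

theorem contDiff_framePsi {n : WithTop ℕ∞} (hS : ContDiff ℝ (n + 1) S) (hv : ContDiff ℝ n v)
    (e : ℝ⁴) : ContDiff ℝ n (framePsi S v w e) := by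
  have hw := F.contDiff_w (hS.of_le le_self_add) hv
  have hvS := hv.dotProduct (contDiff_pd4 hS e)
  have hwS := hw.dotProduct (contDiff_pd4 hS e)
  exact (ofRealCLM.contDiff.comp hvS).add (contDiff_const.mul (ofRealCLM.contDiff.comp hwS))

theorem contDiff_frameA {n : WithTop ℕ∞} (hS : ContDiff ℝ n S) (hv : ContDiff ℝ (n + 1) v)
    (e : ℝ⁴) : ContDiff ℝ n (frameA v w e) :=
  (F.contDiff_w hS (hv.of_le le_self_add)).dotProduct (contDiff_pd4 hv e)

theorem Dcov_Dcov_framePsi (hS : ContDiff ℝ 3 S) (hv : ContDiff ℝ 2 v) (eα ek p : ℝ⁴) :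
    Dcov (frameA v w eα) (Dcov (frameA v w ek) (framePsi S v w ek) ek) eα p
      = pd4 (pd4 (framePsi S v w eα) ek) ek p
        + 2 * I * frameA v w ek p * pd4 (framePsi S v w eα) ek p
        + I * pd4 (frameA v w ek) ek p * framePsi S v w eα p
        - (frameA v w ek p : ℂ) ^ 2 * framePsi S v w eα p
        + I * (framePsi S v w eα p * starRingEnd ℂ (framePsi S v w ek p)).im
          * framePsi S v w ek p := by
  have hS' : ContDiff ℝ 1 S := hS.of_le (by norm_num)
  have hψ (e : ℝ⁴) : ContDiff ℝ 2 (framePsi S v w e) := F.contDiff_framePsi (n := 2) hS hv e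
  have hA (e q : ℝ⁴) : DifferentiableAt ℝ (frameA v w e) q :=
    (F.contDiff_frameA hS' hv e).differentiable one_ne_zero q
  have torsion : Dcov (frameA v w eα) (framePsi S v w ek) eα
      = Dcov (frameA v w ek) (framePsi S v w eα) ek :=
    funext fun q => F.Dcov_framePsi_comm (hS.of_le (by norm_num))
      (hv.differentiable two_ne_zero q) ek eα
  have commutator := Dcov_Dcov_sub_Dcov_Dcov (hA eα p) (hA ek p) (hψ ek) eα ek
  rw [torsion, Dcov_Dcov_self (hA ek p) ((hψ eα).differentiable two_ne_zero p)
    ((hψ eα).differentiableAt_pd4 ek p)] at commutator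
  have curvature := F.pd4_frameA_sub_pd4_frameA (hS'.differentiable one_ne_zero p) hv ek eα
  rw [← curvature]
  push_cast
  linear_combination commutator

end IsOrthonormalFrame

/-- In the caloric gauge (`A_s ≡ 0` and `ψ_s = D₁ψ₁ + D₂ψ₂`) each field `ψ_α`,
`α ∈ {t, 1, 2}`, satisfies the covariant heat equation
`∂_s ψ_α − Δψ_α = 2i(A₁∂₁ψ_α + A₂∂₂ψ_α) − (A₁² + A₂² − i(∂₁A₁ + ∂₂A₂))ψ_α
  + i(Im(ψ_α conj ψ₁)ψ₁ + Im(ψ_α conj ψ₂)ψ₂)`. -/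
theorem covariant_heat_equation_caloric_gauge
    (S v : ℝ × ℝ × ℝ × ℝ → Fin 3 → ℝ)
    (hS : ContDiff ℝ 3 S) (hv : ContDiff ℝ 3 v)
    (hS1 : ∀ p, S p ⬝ᵥ S p = 1) (hv1 : ∀ p, v p ⬝ᵥ v p = 1)
    (hSv : ∀ p, S p ⬝ᵥ v p = 0)
    (w : ℝ × ℝ × ℝ × ℝ → Fin 3 → ℝ) (hw : ∀ p, w p = crossProduct (S p) (v p))
    (hAs : ∀ p : ℝ × ℝ × ℝ × ℝ, frameA v w es p = 0)
    (hps : ∀ p : ℝ × ℝ × ℝ × ℝ,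
      framePsi S v w es p =
        Dcov (frameA v w e1) (framePsi S v w e1) e1 p
          + Dcov (frameA v w e2) (framePsi S v w e2) e2 p) :
    ∀ eα ∈ ({et, e1, e2} : Set (ℝ × ℝ × ℝ × ℝ)), ∀ p : ℝ × ℝ × ℝ × ℝ,
      pd4 (framePsi S v w eα) es p
          - (pd4 (pd4 (framePsi S v w eα) e1) e1 p
            + pd4 (pd4 (framePsi S v w eα) e2) e2 p) =
        2 * Complex.I * ((frameA v w e1 p : ℂ) * pd4 (framePsi S v w eα) e1 p
            + (frameA v w e2 p : ℂ) * pd4 (framePsi S v w eα) e2 p)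
          - ((((frameA v w e1 p) ^ 2 + (frameA v w e2 p) ^ 2 : ℝ) : ℂ)
              - Complex.I * ((pd4 (frameA v w e1) e1 p + pd4 (frameA v w e2) e2 p : ℝ) : ℂ))
            * framePsi S v w eα p
          + Complex.I *
            ((((framePsi S v w eα p * (starRingEnd ℂ) (framePsi S v w e1 p)).im : ℝ) : ℂ)
                * framePsi S v w e1 p
              + (((framePsi S v w eα p * (starRingEnd ℂ) (framePsi S v w e2 p)).im : ℝ) : ℂ)
                * framePsi S v w e2 p) := by
  intro eα _ p
  have F : IsOrthonormalFrame S v w := ⟨hS1, hv1, hSv, hw⟩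
  have hv2 : ContDiff ℝ 2 v := hv.of_le (by norm_num)
  have hDψ (e : ℝ⁴) : DifferentiableAt ℝ (Dcov (frameA v w e) (framePsi S v w e) e) p :=
    (contDiff_Dcov (F.contDiff_frameA (n := 1) (hS.of_le (by norm_num)) hv2 e)
      (F.contDiff_framePsi hS hv2 e) e).differentiable one_ne_zero p
  have hψs : pd4 (framePsi S v w eα) es p = Dcov (frameA v w eα) (framePsi S v w es) eα p := by
    simpa [Dcov_apply, hAs] using F.Dcov_framePsi_comm (hS.of_le (by norm_num))
      (hv.differentiable (by norm_num) p) eα es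
  rw [hψs, show framePsi S v w es = _ from funext hps, Dcov_add (hDψ e1) (hDψ e2),
    F.Dcov_Dcov_framePsi hS hv2, F.Dcov_Dcov_framePsi hS hv2]
  push_cast
  ring
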